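/- For a Hénon type map f of algebraic degree d ≥ 2 on ℂ², the Green function G⁺(z) := lim_{n→∞} d⁻ⁿ log⁺‖fⁿ(z)‖ exists and satisfies the invariance relation G⁺(f(z)) = d·G⁺(z) for all z ∈ ℂ². -/

import Mathlib

/-!
On `V⁺_R = {|z₂| ≤ |z₁|, R ≤ |z₁|}` a Hénon map `h` with `deg p = δ ≥ 2` is dominated by
`z ↦ (lc(p) z₁^δ, z₁)`: for `R` large it maps `V⁺_R` into itself and
`log ‖h z‖ = δ log ‖z‖ + O(1)` there. These properties survive composition, the degrees multiplying.
Off `V⁺_R` an orbit cannot grow beyond `max ‖z‖ R`, because the second coordinate of `h z` is `z₁`.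
So an orbit either enters `V⁺_R`, after which `d⁻ⁿ log ‖fⁿ z‖` moves by `O(d⁻ⁿ)` per step and
converges, or it stays bounded and the limit is `0`. Invariance is the index shift `n ↦ n + 1`.
-/

/-- The Hénon map `h(z₁,z₂) = (p(z₁) + a z₂, z₁)`. -/
noncomputable def henon (p : Polynomial ℂ) (a : ℂ) : ℂ × ℂ → ℂ × ℂ :=
  fun z => (p.eval z.1 + a * z.2, z.1)

/-- The Hénon type map `f = h₁ ∘ ⋯ ∘ hₘ`, a composition of Hénon maps. -/
noncomputable def henonComp {m : ℕ} (p : Fin m → Polynomial ℂ) (a : Fin m → ℂ) :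
    ℂ × ℂ → ℂ × ℂ :=
  (List.ofFn fun i => henon (p i) (a i)).foldr (· ∘ ·) id

open Filter Topology Function Set

section Sequences

variable {d c : ℝ} {u : ℕ → ℝ}

theorem exists_tendsto_inv_pow_mul_of_abs_sub_mul_le (hd : 1 < d) {N : ℕ}
    (h : ∀ n ≥ N, |u (n + 1) - d * u n| ≤ c) :
    ∃ L, Tendsto (fun n => (d ^ n)⁻¹ * u n) atTop (𝓝 L) := by
  have hd0 : 0 < d := one_pos.trans hd
  set v : ℕ → ℝ := fun n => (d ^ n)⁻¹ * u n
  have hstep : ∀ n ≥ N, dist (v n) (v (n + 1)) ≤ c / d * d⁻¹ ^ n := by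
    intro n hn
    have hdiff : v n - v (n + 1) = -((d ^ (n + 1))⁻¹ * (u (n + 1) - d * u n)) := by
      simp only [v]
      field_simp
      ring
    calc dist (v n) (v (n + 1)) = (d ^ (n + 1))⁻¹ * |u (n + 1) - d * u n| := by
          rw [Real.dist_eq, hdiff, abs_neg, abs_mul, abs_of_pos (inv_pos.mpr (pow_pos hd0 _))]
      _ ≤ (d ^ (n + 1))⁻¹ * c := by gcongr; exact h n hn
      _ = c / d * d⁻¹ ^ n := by rw [pow_succ, inv_pow]; field_simp
  have hcauchy : CauchySeq fun k => v (k + N) := by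
    refine cauchySeq_of_le_geometric d⁻¹ (c / d * d⁻¹ ^ N) (inv_lt_one_of_one_lt₀ hd) fun k => ?_
    calc dist (v (k + N)) (v (k + 1 + N)) ≤ c / d * d⁻¹ ^ (k + N) := by
          rw [Nat.add_right_comm]; exact hstep (k + N) (Nat.le_add_left N k)
      _ = c / d * d⁻¹ ^ N * d⁻¹ ^ k := by ring
  exact cauchySeq_tendsto_of_complete ((cauchySeq_shift N).mp hcauchy)

theorem tendsto_inv_pow_mul_of_abs_le (hd : 1 < d) {B : ℝ} (h : ∀ n, |u n| ≤ B) :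
    Tendsto (fun n => (d ^ n)⁻¹ * u n) atTop (𝓝 0) := by
  have hd0 : 0 < d := one_pos.trans hd
  refine squeeze_zero_norm (a := fun n => d⁻¹ ^ n * B) (fun n => ?_) ?_
  · rw [Real.norm_eq_abs, abs_mul, abs_of_pos (inv_pos.mpr (pow_pos hd0 n)), inv_pow]
    gcongr
    exact h n
  · simpa using (tendsto_pow_atTop_nhds_zero_of_lt_one (inv_nonneg.mpr hd0.le)
      (inv_lt_one_of_one_lt₀ hd)).mul_const B

end Sequences

theorem eq_mul_of_tendsto_inv_pow_mul_iterate {α : Type*} (f : α → α) (φ : α → ℝ) {d : ℝ}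
    (hd : d ≠ 0) {z : α} {L L' : ℝ}
    (h : Tendsto (fun n => (d ^ n)⁻¹ * φ (f^[n] z)) atTop (𝓝 L))
    (h' : Tendsto (fun n => (d ^ n)⁻¹ * φ (f^[n] (f z))) atTop (𝓝 L')) :
    L' = d * L := by
  have hshift : (fun n => (d ^ n)⁻¹ * φ (f^[n] (f z)))
      = fun n => d * ((d ^ (n + 1))⁻¹ * φ (f^[n + 1] z)) := by
    ext n
    rw [iterate_succ_apply, pow_succ]
    field_simp
  rw [hshift] at h'
  exact tendsto_nhds_unique h' (((tendsto_add_atTop_iff_nat 1).mpr h).const_mul d)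

theorem abs_log_norm_sub_log_norm_le_log_two {E : Type*} [SeminormedAddCommGroup E] {v w : E}
    (hv : 0 < ‖v‖) (h : ‖w - v‖ ≤ ‖v‖ / 2) : |Real.log ‖w‖ - Real.log ‖v‖| ≤ Real.log 2 := by
  have hvw : ‖v‖ ≤ 2 * ‖w‖ := by linarith [norm_sub_norm_le v w, norm_sub_rev v w]
  have hwv : ‖w‖ ≤ 2 * ‖v‖ := by linarith [norm_sub_norm_le w v]
  have hw : 0 < ‖w‖ := by linarith
  rw [abs_le]
  constructor
  · have := Real.log_le_log hv hvw
    rw [Real.log_mul two_ne_zero hw.ne'] at this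
    linarith
  · have := Real.log_le_log hw hwv
    rw [Real.log_mul two_ne_zero hv.ne'] at this
    linarith

theorem norm_eval_sub_leadingCoeff_mul_pow_le {𝕜 : Type*} [NormedField 𝕜] (q : Polynomial 𝕜)
    {x : 𝕜} (hx : 1 ≤ ‖x‖) :
    ‖q.eval x - q.leadingCoeff * x ^ q.natDegree‖ ≤
      (∑ i ∈ Finset.range q.natDegree, ‖q.coeff i‖) * ‖x‖ ^ (q.natDegree - 1) := by
  rw [Polynomial.eval_eq_sum_range, Finset.sum_range_succ, Polynomial.coeff_natDegree,
    add_sub_cancel_right, Finset.sum_mul]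
  refine (norm_sum_le _ _).trans (Finset.sum_le_sum fun i hi => ?_)
  rw [norm_mul, norm_pow]
  gcongr
  have := Finset.mem_range.mp hi
  omega

/-- The region `V⁺_R` of the standard filtration of `ℂ²` for Hénon maps. -/
def vPlus (R : ℝ) : Set (ℂ × ℂ) := {z | max ‖z.2‖ R ≤ ‖z.1‖}

theorem vPlus_anti {R R' : ℝ} (h : R ≤ R') : vPlus R' ⊆ vPlus R :=
  fun _ hz => (max_le_max_left _ h).trans hz

theorem norm_eq_norm_fst_of_mem_vPlus {R : ℝ} {z : ℂ × ℂ} (hz : z ∈ vPlus R) : ‖z‖ = ‖z.1‖ :=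
  max_eq_left ((le_max_left _ _).trans hz)

theorem one_le_norm_of_mem_vPlus {R : ℝ} (hR : 1 ≤ R) {z : ℂ × ℂ} (hz : z ∈ vPlus R) :
    1 ≤ ‖z‖ :=
  hR.trans (((le_max_right _ _).trans hz).trans (norm_fst_le z))

structure HasFiltration (f : ℂ × ℂ → ℂ × ℂ) (d R c : ℝ) : Prop where
  one_le : 1 ≤ R
  mapsTo : ∀ R' ≥ R, MapsTo f (vPlus R') (vPlus R')
  mem_or_norm_le : ∀ R' ≥ R, ∀ z, f z ∈ vPlus R' ∨ ‖f z‖ ≤ max ‖z‖ R'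
  abs_log_sub_le : ∀ z ∈ vPlus R, |Real.log ‖f z‖ - d * Real.log ‖z‖| ≤ c

theorem hasFiltration_id : HasFiltration id 1 1 0 where
  one_le := le_rfl
  mapsTo _ _ := mapsTo_id _
  mem_or_norm_le _ _ z := Or.inr (le_max_left _ _)
  abs_log_sub_le z _ := by simp

theorem HasFiltration.comp {h g : ℂ × ℂ → ℂ × ℂ} {dh dg Rh Rg ch cg : ℝ}
    (hh : HasFiltration h dh Rh ch) (hg : HasFiltration g dg Rg cg) (hdh : 0 ≤ dh) :
    HasFiltration (h ∘ g) (dh * dg) (max Rh Rg) (ch + dh * cg) where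
  one_le := hh.one_le.trans (le_max_left _ _)
  mapsTo R' hR' :=
    (hh.mapsTo R' (le_of_max_le_left hR')).comp (hg.mapsTo R' (le_of_max_le_right hR'))
  mem_or_norm_le R' hR' z := by
    rcases hg.mem_or_norm_le R' (le_of_max_le_right hR') z with hgz | hgz
    · exact Or.inl (hh.mapsTo R' (le_of_max_le_left hR') hgz)
    · refine (hh.mem_or_norm_le R' (le_of_max_le_left hR') (g z)).imp_right fun hhgz => ?_
      exact hhgz.trans (max_le hgz (le_max_right _ _))
  abs_log_sub_le z hz := by
    have hgz : g z ∈ vPlus Rh := vPlus_anti (le_max_left _ _) (hg.mapsTo _ (le_max_right _ _) hz)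
    have hh' := hh.abs_log_sub_le (g z) hgz
    have hg' := hg.abs_log_sub_le z (vPlus_anti (le_max_right _ _) hz)
    calc |Real.log ‖h (g z)‖ - dh * dg * Real.log ‖z‖|
        = |(Real.log ‖h (g z)‖ - dh * Real.log ‖g z‖)
            + dh * (Real.log ‖g z‖ - dg * Real.log ‖z‖)| := by ring_nf
      _ ≤ ch + dh * cg := by
        refine (abs_add_le _ _).trans (add_le_add hh' ?_)
        rw [abs_mul, abs_of_nonneg hdh]
        exact mul_le_mul_of_nonneg_left hg' hdh

theorem HasFiltration.iterate_mem_vPlus {f : ℂ × ℂ → ℂ × ℂ} {d R c : ℝ}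
    (hf : HasFiltration f d R c) {z : ℂ × ℂ} {N : ℕ} (hN : f^[N] z ∈ vPlus R) :
    ∀ n ≥ N, f^[n] z ∈ vPlus R := by
  refine Nat.le_induction hN fun n _ hn => ?_
  rw [iterate_succ_apply']
  exact hf.mapsTo R le_rfl hn

theorem HasFiltration.norm_iterate_le {f : ℂ × ℂ → ℂ × ℂ} {d R c : ℝ}
    (hf : HasFiltration f d R c) {z : ℂ × ℂ} (hz : ∀ n, f^[n] z ∉ vPlus R) (n : ℕ) :
    ‖f^[n] z‖ ≤ max ‖z‖ R := by
  induction n with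
  | zero => exact le_max_left _ _
  | succ n ih =>
    rw [iterate_succ_apply']
    refine ((hf.mem_or_norm_le R le_rfl _).resolve_left ?_).trans (max_le ih (le_max_right _ _))
    rw [← iterate_succ_apply' f]
    exact hz (n + 1)

theorem HasFiltration.exists_tendsto {f : ℂ × ℂ → ℂ × ℂ} {d R c : ℝ}
    (hf : HasFiltration f d R c) (hd : 1 < d) (z : ℂ × ℂ) :
    ∃ L, Tendsto (fun n => (d ^ n)⁻¹ * Real.log (max ‖f^[n] z‖ 1)) atTop (𝓝 L) := by
  by_cases hesc : ∃ N, f^[N] z ∈ vPlus R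
  · obtain ⟨N, hN⟩ := hesc
    have hlog : ∀ n ≥ N, Real.log (max ‖f^[n] z‖ 1) = Real.log ‖f^[n] z‖ := fun n hn => by
      rw [max_eq_left (one_le_norm_of_mem_vPlus hf.one_le (hf.iterate_mem_vPlus hN n hn))]
    refine exists_tendsto_inv_pow_mul_of_abs_sub_mul_le hd (c := c) (N := N) fun n hn => ?_
    rw [hlog n hn, hlog (n + 1) (Nat.le_succ_of_le hn), iterate_succ_apply']
    exact hf.abs_log_sub_le _ (hf.iterate_mem_vPlus hN n hn)
  · simp only [not_exists] at hesc
    refine ⟨0, tendsto_inv_pow_mul_of_abs_le hd (B := Real.log (max (max ‖z‖ R) 1)) fun n => ?_⟩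
    rw [abs_of_nonneg (Real.log_nonneg (le_max_right _ _))]
    exact Real.log_le_log (by positivity) (max_le_max_right 1 (hf.norm_iterate_le hesc n))

theorem norm_henon_fst_sub_le (q : Polynomial ℂ) (b : ℂ) (hq : 2 ≤ q.natDegree) {z : ℂ × ℂ}
    (hz : ‖z.2‖ ≤ ‖z.1‖) (hz1 : 1 ≤ ‖z.1‖) :
    ‖(henon q b z).1 - q.leadingCoeff * z.1 ^ q.natDegree‖ ≤
      (∑ i ∈ Finset.range q.natDegree, ‖q.coeff i‖ + ‖b‖) * ‖z.1‖ ^ (q.natDegree - 1) := by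
  have hb : ‖b * z.2‖ ≤ ‖b‖ * ‖z.1‖ ^ (q.natDegree - 1) := by
    rw [norm_mul]
    gcongr
    exact hz.trans (le_self_pow₀ hz1 (by omega))
  calc ‖(henon q b z).1 - q.leadingCoeff * z.1 ^ q.natDegree‖
      = ‖(q.eval z.1 - q.leadingCoeff * z.1 ^ q.natDegree) + b * z.2‖ := by
        simp only [henon]; ring_nf
    _ ≤ _ := (norm_add_le _ _).trans (add_le_add (norm_eval_sub_leadingCoeff_mul_pow_le q hz1) hb)
    _ = _ := by ring

theorem exists_henon_fst_estimate (q : Polynomial ℂ) (b : ℂ) (hq : 2 ≤ q.natDegree) :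
    ∃ R ≥ 1, ∃ c, ∀ z ∈ vPlus R, ‖z.1‖ ≤ ‖(henon q b z).1‖ ∧
      |Real.log ‖(henon q b z).1‖ - q.natDegree * Real.log ‖z.1‖| ≤ c := by
  have hl : 0 < ‖q.leadingCoeff‖ :=
    norm_pos_iff.mpr (Polynomial.leadingCoeff_ne_zero.mpr (by rintro rfl; simp at hq))
  set n := q.natDegree
  set l := ‖q.leadingCoeff‖
  set K := ∑ i ∈ Finset.range n, ‖q.coeff i‖ + ‖b‖
  have hK : 0 ≤ K := by positivity
  refine ⟨max 1 (2 * (K + 1) / l), le_max_left _ _, Real.log 2 + |Real.log l|, fun z hz => ?_⟩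
  set X := ‖z.1‖
  have hX1 : 1 ≤ X := (le_max_left _ _).trans ((le_max_right _ _).trans hz)
  have hlX : 2 * (K + 1) ≤ l * X := by
    rw [← div_le_iff₀' hl]; exact (le_max_right _ _).trans ((le_max_right _ _).trans hz)
  set v := q.leadingCoeff * z.1 ^ n
  set w := (henon q b z).1
  have hv : ‖v‖ = l * X ^ n := by rw [norm_mul, norm_pow]
  have hvpos : 0 < ‖v‖ := by rw [hv]; positivity
  -- the choice of `R` makes the lower-order terms at most half the leading term
  have hwv : ‖w - v‖ ≤ ‖v‖ / 2 := by
    calc ‖w - v‖ ≤ K * X ^ (n - 1) := norm_henon_fst_sub_le q b hq ((le_max_left _ _).trans hz) hX1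
      _ ≤ l * X / 2 * X ^ (n - 1) := by gcongr; linarith
      _ = ‖v‖ / 2 := by rw [hv, ← mul_pow_sub_one (by omega : n ≠ 0) X]; ring
  refine ⟨?_, ?_⟩
  · calc X ≤ X ^ (n - 1) := le_self_pow₀ hX1 (by omega)
      _ ≤ l * X / 2 * X ^ (n - 1) := le_mul_of_one_le_left (by positivity) (by linarith)
      _ = ‖v‖ / 2 := by rw [hv, ← mul_pow_sub_one (by omega : n ≠ 0) X]; ring
      _ ≤ ‖w‖ := by linarith [norm_sub_norm_le v w, norm_sub_rev v w]
  · have hlogv : Real.log ‖v‖ = Real.log l + n * Real.log X := by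
      rw [hv, Real.log_mul hl.ne' (by positivity), Real.log_pow]
    have := abs_log_norm_sub_log_norm_le_log_two hvpos hwv
    rw [hlogv] at this
    calc |Real.log ‖w‖ - n * Real.log X|
        = |(Real.log ‖w‖ - (Real.log l + n * Real.log X)) + Real.log l| := by ring_nf
      _ ≤ _ := (abs_add_le _ _).trans (add_le_add_left this _)

theorem henon_mem_vPlus_or_norm_le (q : Polynomial ℂ) (b : ℂ) (R : ℝ) (z : ℂ × ℂ) :
    henon q b z ∈ vPlus R ∨ ‖henon q b z‖ ≤ max ‖z‖ R := by
  refine or_iff_not_imp_left.mpr fun h => ?_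
  have hfst : ‖(henon q b z).1‖ ≤ max ‖z.1‖ R := (not_le.mp h).le
  exact max_le (hfst.trans (max_le_max_right R (norm_fst_le z)))
    ((norm_fst_le z).trans (le_max_left _ _))

theorem hasFiltration_henon (q : Polynomial ℂ) (b : ℂ) (hq : 2 ≤ q.natDegree) :
    ∃ R c, HasFiltration (henon q b) q.natDegree R c := by
  obtain ⟨R, hR, c, hest⟩ := exists_henon_fst_estimate q b hq
  have hmaps : ∀ R' ≥ R, MapsTo (henon q b) (vPlus R') (vPlus R') := fun R' hR' z hz =>
    have hgrow := (hest z (vPlus_anti hR' hz)).1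
    max_le hgrow (((le_max_right _ _).trans hz).trans hgrow)
  refine ⟨R, c, hR, hmaps, fun R' _ => henon_mem_vPlus_or_norm_le q b R', fun z hz => ?_⟩
  rw [norm_eq_norm_fst_of_mem_vPlus hz, norm_eq_norm_fst_of_mem_vPlus (hmaps R le_rfl hz)]
  exact (hest z hz).2

theorem henonComp_succ {m : ℕ} (p : Fin (m + 1) → Polynomial ℂ) (a : Fin (m + 1) → ℂ) :
    henonComp p a = henon (p 0) (a 0) ∘ henonComp (fun i => p i.succ) (fun i => a i.succ) := by
  simp [henonComp, List.ofFn_succ]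

theorem hasFiltration_henonComp {m : ℕ} (p : Fin m → Polynomial ℂ) (a : Fin m → ℂ)
    (hdeg : ∀ i, 2 ≤ (p i).natDegree) :
    ∃ R c, HasFiltration (henonComp p a) ((∏ i, (p i).natDegree : ℕ) : ℝ) R c := by
  induction m with
  | zero => exact ⟨1, 0, by simpa [henonComp] using hasFiltration_id⟩
  | succ m ih =>
    obtain ⟨Rg, cg, hg⟩ := ih (fun i => p i.succ) (fun i => a i.succ) fun i => hdeg i.succ
    obtain ⟨Rh, ch, hh⟩ := hasFiltration_henon (p 0) (a 0) (hdeg 0)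
    rw [henonComp_succ, Fin.prod_univ_succ, Nat.cast_mul]
    exact ⟨_, _, hh.comp hg (Nat.cast_nonneg _)⟩

theorem green_function_exists_invariant_general (m : ℕ) (p : Fin (m + 1) → Polynomial ℂ)
    (a : Fin (m + 1) → ℂ) (hdeg : ∀ i, 2 ≤ (p i).natDegree) :
    ∃ G : ℂ × ℂ → ℝ,
      (∀ z : ℂ × ℂ, Filter.Tendsto
        (fun n : ℕ => (((∏ i, (p i).natDegree : ℕ) : ℝ) ^ n)⁻¹ *
          Real.log (max ‖(henonComp p a)^[n] z‖ 1))
        Filter.atTop (nhds (G z))) ∧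
      ∀ z : ℂ × ℂ, G (henonComp p a z) = ((∏ i, (p i).natDegree : ℕ) : ℝ) * G z := by
  obtain ⟨R, c, hf⟩ := hasFiltration_henonComp p a hdeg
  have hd : 1 < ((∏ i, (p i).natDegree : ℕ) : ℝ) := by
    have h2 : ∏ _i : Fin (m + 1), 2 ≤ ∏ i, (p i).natDegree :=
      Finset.prod_le_prod' fun i _ => hdeg i
    rw [Finset.prod_const, Finset.card_univ, Fintype.card_fin] at h2
    exact_mod_cast (Nat.one_lt_two_pow (Nat.succ_ne_zero m)).trans_le h2
  choose G hG using hf.exists_tendsto hd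
  exact ⟨G, hG, fun z => eq_mul_of_tendsto_inv_pow_mul_iterate (henonComp p a)
    (fun w => Real.log (max ‖w‖ 1)) (one_pos.trans hd).ne' (hG z) (hG (henonComp p a z))⟩

/-- For a Hénon type map `f` of algebraic degree `d = ∏ deg pⱼ ≥ 2` on `ℂ²`, the
Green function `G⁺(z) := lim d⁻ⁿ log⁺ ‖fⁿ(z)‖` exists (here
`log⁺ t = log (max t 1)`) and satisfies `G⁺(f z) = d · G⁺(z)` for all `z`. -/
theorem green_function_exists_invariant (m : ℕ) (p : Fin (m + 1) → Polynomial ℂ)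
    (a : Fin (m + 1) → ℂ) (hdeg : ∀ i, 2 ≤ (p i).natDegree) (ha : ∀ i, a i ≠ 0) :
    ∃ G : ℂ × ℂ → ℝ,
      (∀ z : ℂ × ℂ, Filter.Tendsto
        (fun n : ℕ => (((∏ i, (p i).natDegree : ℕ) : ℝ) ^ n)⁻¹ *
          Real.log (max ‖(henonComp p a)^[n] z‖ 1))
        Filter.atTop (nhds (G z))) ∧
      ∀ z : ℂ × ℂ, G (henonComp p a z) = ((∏ i, (p i).natDegree : ℕ) : ℝ) * G z :=
  green_function_exists_invariant_general m p a hdeg
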